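/- Let H be a finite-dimensional Hopf algebra over a field k and D(H) its Drinfeld quantum double. Then the category of left D(H)-modules is isomorphic, as a braided monoidal category, to the category of left-left Yetter-Drinfeld modules over H: a D(H)-module structure on a vector space V is the same data as an H-module structure together with an H*-action (equivalently H-comodule structure) satisfying the compatibility h(f ⊳ v) = ⟨f, s⁻¹(h''') ( − ) h'⟩ ⊳ (h'' v) for h ∈ H, f ∈ H*, v ∈ V. -/

import Mathlib

open TensorProduct

universe u

variable (k : Type u) [Field k] (H : Type u) [Ring H] [HopfAlgebra k H]

/-- The Yetter–Drinfeld crossing condition for a left `H`-module (action `aV`)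
and left `H`-comodule (coaction `ΔV`) `V`: as linear maps `H ⊗ V → V ⊗ H`,
`h' v_{(V)} ⊗ h'' v_{(1)} = (h'' v)_{(V)} ⊗ (h'' v)_{(1)} h'`. -/
def YDCrossing (V : Type u) [AddCommGroup V] [Module k V]
    (aV : H →ₗ[k] V →ₗ[k] V) (ΔV : V →ₗ[k] V ⊗[k] H) : Prop :=
  (TensorProduct.map (TensorProduct.lift aV) (LinearMap.mul' k H)) ∘ₗ
      (TensorProduct.tensorTensorTensorComm k H H V H).toLinearMap ∘ₗ
      (TensorProduct.map (Coalgebra.comul (R := k)) ΔV) =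
    (TensorProduct.map LinearMap.id (LinearMap.mul' k H)) ∘ₗ
      (TensorProduct.assoc k V H H).toLinearMap ∘ₗ
      (TensorProduct.comm k H (V ⊗[k] H)).toLinearMap ∘ₗ
      (TensorProduct.map LinearMap.id ΔV) ∘ₗ
      (TensorProduct.map LinearMap.id (TensorProduct.lift aV)) ∘ₗ
      (TensorProduct.assoc k H H V).toLinearMap ∘ₗ
      (TensorProduct.map (Coalgebra.comul (R := k)) LinearMap.id)

/-- Coassociativity of a comodule coaction. -/
def YDCoassoc (V : Type u) [AddCommGroup V] [Module k V]
    (ΔV : V →ₗ[k] V ⊗[k] H) : Prop :=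
  (TensorProduct.assoc k V H H).toLinearMap ∘ₗ
      (TensorProduct.map ΔV LinearMap.id) ∘ₗ ΔV =
    (TensorProduct.map LinearMap.id (Coalgebra.comul (R := k))) ∘ₗ ΔV

/-- Counitarity of a comodule coaction. -/
def YDCounital (V : Type u) [AddCommGroup V] [Module k V]
    (ΔV : V →ₗ[k] V ⊗[k] H) : Prop :=
  (TensorProduct.rid k V).toLinearMap ∘ₗ
      (TensorProduct.map LinearMap.id (Coalgebra.counit (R := k))) ∘ₗ ΔV =
    LinearMap.id

/-- Unitality and multiplicativity of a module action. -/
def IsAction (V : Type u) [AddCommGroup V] [Module k V]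
    (aV : H →ₗ[k] V →ₗ[k] V) : Prop :=
  (∀ v : V, aV 1 v = v) ∧ (∀ (g h : H) (v : V), aV (g * h) v = aV g (aV h v))

/-- The diagonal (comultiplication) action of `H` on a tensor product of two
modules with actions `aM`, `aN` (given as linear maps `H ⊗ M → M`). -/
noncomputable def tAct {k : Type u} [Field k] {H : Type u} [Ring H] [HopfAlgebra k H]
    {M N : Type u} [AddCommGroup M] [Module k M] [AddCommGroup N] [Module k N]
    (aM : H ⊗[k] M →ₗ[k] M) (aN : H ⊗[k] N →ₗ[k] N) :
    H ⊗[k] (M ⊗[k] N) →ₗ[k] M ⊗[k] N :=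
  (TensorProduct.map aM aN) ∘ₗ
    (TensorProduct.tensorTensorTensorComm k H H M N).toLinearMap ∘ₗ
    (TensorProduct.map (Coalgebra.comul (R := k)) LinearMap.id)

/-- The half-braiding `c_X(v ⊗ x) = s(v_{(1)}) x ⊗ v_{(V)}` associated with a
Yetter-Drinfeld coaction `ΔV` and a module `X` with action `aX`. -/
noncomputable def ydHalfBraiding {k : Type u} [Field k] {H : Type u} [Ring H]
    [HopfAlgebra k H] {V X : Type u}
    [AddCommGroup V] [Module k V] [AddCommGroup X] [Module k X]
    (ΔV : V →ₗ[k] V ⊗[k] H) (aX : H ⊗[k] X →ₗ[k] X) :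
    V ⊗[k] X →ₗ[k] X ⊗[k] V :=
  (TensorProduct.comm k V X).toLinearMap ∘ₗ
    (TensorProduct.map LinearMap.id
      (aX ∘ₗ (TensorProduct.map (HopfAlgebra.antipode (R := k)) LinearMap.id))) ∘ₗ
    (TensorProduct.assoc k V H X).toLinearMap ∘ₗ
    (TensorProduct.map ΔV LinearMap.id)

/-- The candidate inverse `ĉ_X(x ⊗ v) = v_{(V)} ⊗ v_{(1)} x`. -/
noncomputable def ydHalfBraidingInv {k : Type u} [Field k] {H : Type u} [Ring H]
    [HopfAlgebra k H] {V X : Type u}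
    [AddCommGroup V] [Module k V] [AddCommGroup X] [Module k X]
    (ΔV : V →ₗ[k] V ⊗[k] H) (aX : H ⊗[k] X →ₗ[k] X) :
    X ⊗[k] V →ₗ[k] V ⊗[k] X :=
  (TensorProduct.map LinearMap.id aX) ∘ₗ
    (TensorProduct.assoc k V H X).toLinearMap ∘ₗ
    (TensorProduct.map ΔV LinearMap.id) ∘ₗ
    (TensorProduct.comm k X V).toLinearMap

/-- Convolution product on the dual of a Hopf algebra: `⟨f*g, x⟩ = f(x')g(x'')`. -/
noncomputable def dualConv {k : Type u} [Field k] {H : Type u} [Ring H]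
    [HopfAlgebra k H] (f g : Module.Dual k H) : Module.Dual k H :=
  (LinearMap.mul' k k) ∘ₗ (TensorProduct.map f g) ∘ₗ (Coalgebra.comul (R := k))

/-!
Write `f ⊳ v` for `B f v` and `h · v` for `aV h v`, and let `ΔV v = ∑ᵢ (eⁱ ⊳ v) ⊗ eᵢ`, so that
slicing `ΔV v` with `g ∈ H*` gives back `g ⊳ v`. Since the functionals separate `V ⊗ H`, each
Yetter–Drinfeld axiom can be tested after slicing: coassociativity and counitality of `ΔV` become
`(f * g) ⊳ v = f ⊳ (g ⊳ v)` and `ε ⊳ v = v`, and the crossing condition becomes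
`h' · (f(h'' −) ⊳ v) = f(− h') ⊳ (h'' · v)` for all `f`. This identity is equivalent to the
straightening relation: substituting the straightening relation into its left side produces the
factor `h'''' s⁻¹(h''')`, which collapses by the antipode axiom, and conversely
`h ⊗ 1 = h' ⊗ s⁻¹(h''') h''` lets one move `h` past `f` using the crossing identity for
`f(s⁻¹(h''') −)`. The braiding is a direct computation.
-/

section InverseAntipode

open Coalgebra HopfAlgebra

variable {R A : Type*} [CommSemiring R] [Semiring A] [HopfAlgebra R A]

theorem mul_antidistrib_of_inverse_antipode {sInv : A →ₗ[R] A}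
    (h₁ : Function.LeftInverse sInv (antipode R)) (h₂ : Function.RightInverse sInv (antipode R))
    (a b : A) : sInv (a * b) = sInv b * sInv a := by
  conv_lhs => rw [← h₂ a, ← h₂ b, ← antipode_mul_antidistrib]
  exact h₁ _

theorem map_one_of_leftInverse_antipode {sInv : A →ₗ[R] A}
    (h₁ : Function.LeftInverse sInv (antipode R)) : sInv 1 = 1 := by
  simpa using h₁ 1

noncomputable def flipMulRight (sInv : A →ₗ[R] A) : A ⊗[R] A →ₗ[R] A :=
  LinearMap.mul' R A ∘ₗ sInv.lTensor A ∘ₗ (TensorProduct.comm R A A).toLinearMap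

@[simp]
theorem flipMulRight_tmul (sInv : A →ₗ[R] A) (a b : A) :
    flipMulRight sInv (a ⊗ₜ b) = b * sInv a :=
  rfl

noncomputable def flipMulLeft (sInv : A →ₗ[R] A) : A ⊗[R] A →ₗ[R] A :=
  LinearMap.mul' R A ∘ₗ sInv.rTensor A ∘ₗ (TensorProduct.comm R A A).toLinearMap

@[simp]
theorem flipMulLeft_tmul (sInv : A →ₗ[R] A) (a b : A) :
    flipMulLeft sInv (a ⊗ₜ b) = sInv b * a :=
  rfl

theorem flipMulRight_comp_comul {sInv : A →ₗ[R] A}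
    (h₁ : Function.LeftInverse sInv (antipode R)) (h₂ : Function.RightInverse sInv (antipode R)) :
    flipMulRight sInv ∘ₗ comul = Algebra.linearMap R A ∘ₗ counit := by
  ext x
  let 𝓡 := Coalgebra.Repr.arbitrary R x
  have := congr(sInv $(sum_mul_antipode_eq_algebraMap_counit 𝓡))
  simp only [map_sum, mul_antidistrib_of_inverse_antipode h₁ h₂, h₁ _,
    Algebra.algebraMap_eq_smul_one, map_smul, map_one_of_leftInverse_antipode h₁] at this
  simp [← 𝓡.eq, this, Algebra.algebraMap_eq_smul_one]

theorem flipMulLeft_comp_comul {sInv : A →ₗ[R] A}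
    (h₁ : Function.LeftInverse sInv (antipode R)) (h₂ : Function.RightInverse sInv (antipode R)) :
    flipMulLeft sInv ∘ₗ comul = Algebra.linearMap R A ∘ₗ counit := by
  ext x
  let 𝓡 := Coalgebra.Repr.arbitrary R x
  have := congr(sInv $(sum_antipode_mul_eq_algebraMap_counit 𝓡))
  simp only [map_sum, mul_antidistrib_of_inverse_antipode h₁ h₂, h₁ _,
    Algebra.algebraMap_eq_smul_one, map_smul, map_one_of_leftInverse_antipode h₁] at this
  simp [← 𝓡.eq, this, Algebra.algebraMap_eq_smul_one]

theorem lTensor_algebraMap_counit_comp_comul :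
    (Algebra.linearMap R A ∘ₗ counit).lTensor A ∘ₗ comul = (TensorProduct.mk R A A).flip 1 := by
  ext x
  rw [LinearMap.comp_apply, LinearMap.lTensor_comp_apply, lTensor_counit_comul]
  simp

-- `h' ⊗ s⁻¹(h''') h'' = h ⊗ 1`
theorem lTensor_flipMulLeft_comp_comul_comul {sInv : A →ₗ[R] A}
    (h₁ : Function.LeftInverse sInv (antipode R)) (h₂ : Function.RightInverse sInv (antipode R)) :
    (flipMulLeft sInv).lTensor A ∘ₗ comul.lTensor A ∘ₗ comul = (TensorProduct.mk R A A).flip 1 := by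
  rw [← LinearMap.comp_assoc, ← LinearMap.lTensor_comp, flipMulLeft_comp_comul h₁ h₂,
    lTensor_algebraMap_counit_comp_comul]

-- `h' ⊗ h'' ⊗ h'''' s⁻¹(h''') = h' ⊗ h'' ⊗ 1`
theorem lTensor_lTensor_flipMulRight_comp_comul_comul_comul {sInv : A →ₗ[R] A}
    (h₁ : Function.LeftInverse sInv (antipode R)) (h₂ : Function.RightInverse sInv (antipode R)) :
    ((flipMulRight sInv).lTensor A).lTensor A ∘ₗ
        ((TensorProduct.assoc R A A A).toLinearMap.lTensor A ∘ₗ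
          (TensorProduct.assoc R A (A ⊗[R] A) A).toLinearMap) ∘ₗ
        (comul.lTensor A ∘ₗ comul).rTensor A ∘ₗ comul =
      ((TensorProduct.mk R A A).flip 1).lTensor A ∘ₗ comul := by
  have coassoc₄ : ((TensorProduct.assoc R A A A).toLinearMap.lTensor A ∘ₗ
        (TensorProduct.assoc R A (A ⊗[R] A) A).toLinearMap) ∘ₗ
        (comul.lTensor A ∘ₗ comul).rTensor A ∘ₗ comul =
      (comul.lTensor A).lTensor A ∘ₗ comul.lTensor A ∘ₗ (comul (R := R) (A := A)) := by
    simp only [coassoc_simps]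
  rw [coassoc₄, ← LinearMap.comp_assoc, ← LinearMap.lTensor_comp, ← LinearMap.comp_assoc,
    ← LinearMap.lTensor_comp, ← LinearMap.lTensor_comp]
  simp only [flipMulRight_comp_comul h₁ h₂, lTensor_algebraMap_counit_comp_comul]

end InverseAntipode

theorem assoc_tmul_eq_lTensor_flip_mk {R M N P : Type*} [CommSemiring R] [AddCommMonoid M]
    [Module R M] [AddCommMonoid N] [Module R N] [AddCommMonoid P] [Module R P]
    (y : M ⊗[R] N) (p : P) :
    TensorProduct.assoc R M N P (y ⊗ₜ p) = ((TensorProduct.mk R N P).flip p).lTensor M y := by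
  induction y using TensorProduct.induction_on with
  | zero => simp
  | tmul m n => simp
  | add y z hy hz => simp only [TensorProduct.add_tmul, map_add, hy, hz]

theorem eq_apply_iff_forall_eq_sum_tmul_tmul {R : Type*} [CommSemiring R] {M₁ M₂ M₃ : Type u}
    {P : Type*} [AddCommMonoid M₁] [Module R M₁] [AddCommMonoid M₂] [Module R M₂]
    [AddCommMonoid M₃] [Module R M₃] [AddCommMonoid P] [Module R P]
    (Φ : M₁ ⊗[R] (M₂ ⊗[R] M₃) →ₗ[R] P) (x : M₁ ⊗[R] (M₂ ⊗[R] M₃)) (p : P) :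
    (∀ (ι : Type u) (S : Finset ι) (m₁ : ι → M₁) (m₂ : ι → M₂) (m₃ : ι → M₃),
      x = ∑ i ∈ S, m₁ i ⊗ₜ (m₂ i ⊗ₜ m₃ i) → p = ∑ i ∈ S, Φ (m₁ i ⊗ₜ (m₂ i ⊗ₜ m₃ i))) ↔
      p = Φ x := by
  constructor
  · intro h
    obtain ⟨S, hS⟩ := TensorProduct.exists_finset x
    choose T hT using fun q : M₁ × (M₂ ⊗[R] M₃) => TensorProduct.exists_finset q.2
    have hx : x = ∑ q ∈ S.sigma T, q.1.1 ⊗ₜ (q.2.1 ⊗ₜ q.2.2) := by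
      rw [Finset.sum_sigma, hS]
      exact Finset.sum_congr rfl fun q _ => by conv_lhs => rw [hT q, TensorProduct.tmul_sum]
    rw [h _ _ _ _ _ hx, hx, map_sum]
  · rintro rfl ι S m₁ m₂ m₃ rfl
    rw [map_sum]

section Slice

variable {R M N : Type*} [CommSemiring R] [AddCommMonoid M] [Module R M] [AddCommMonoid N]
  [Module R N]

noncomputable def sliceRight (g : Module.Dual R N) : M ⊗[R] N →ₗ[R] M :=
  (TensorProduct.rid R M).toLinearMap ∘ₗ g.lTensor M

@[simp]
theorem sliceRight_tmul (g : Module.Dual R N) (m : M) (n : N) :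
    sliceRight g (m ⊗ₜ n) = g n • m := by
  simp [sliceRight]

theorem sliceRight_map {M' N' : Type*} [AddCommMonoid M'] [Module R M'] [AddCommMonoid N']
    [Module R N'] (φ : M →ₗ[R] M') (ψ : N →ₗ[R] N') (g : Module.Dual R N') (x : M ⊗[R] N) :
    sliceRight g (TensorProduct.map φ ψ x) = φ (sliceRight (g ∘ₗ ψ) x) := by
  induction x using TensorProduct.induction_on with
  | zero => simp
  | tmul m n => simp
  | add x y hx hy => simp only [map_add, hx, hy]

theorem ext_sliceRight [Module.Free R N] {x y : M ⊗[R] N}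
    (h : ∀ g : Module.Dual R N, sliceRight g x = sliceRight g y) : x = y := by
  classical
  let b := Module.Free.chooseBasis R N
  apply (TensorProduct.equivFinsuppOfBasisRight b).injective
  ext i
  rw [TensorProduct.equivFinsuppOfBasisRight_apply, TensorProduct.equivFinsuppOfBasisRight_apply]
  exact h (b.coord i)

theorem eq_iff_forall_sliceRight_tmul [Module.Free R N] {P Q : Type*} [AddCommMonoid P]
    [Module R P] [AddCommMonoid Q] [Module R Q] (φ ψ : P ⊗[R] Q →ₗ[R] M ⊗[R] N) :
    φ = ψ ↔ ∀ p q g, sliceRight g (φ (p ⊗ₜ q)) = sliceRight g (ψ (p ⊗ₜ q)) :=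
  ⟨by rintro rfl; simp, fun h => TensorProduct.ext' fun p q => ext_sliceRight (h p q)⟩

end Slice

section DoubleModule

open Coalgebra

variable {k H} {V : Type u} [AddCommGroup V] [Module k V]
  (aV : H →ₗ[k] V →ₗ[k] V) (B : Module.Dual k H →ₗ[k] V →ₗ[k] V) (v : V)

-- Sliced with `f`, the two sides of the crossing condition at `h ⊗ v` are
-- `crossingLeft f (Δ h)` and `crossingRight f (Δ h)`, and the right side of the straightening
-- relation is `straightening f ((id ⊗ id ⊗ s⁻¹) (Δ₂ h))`.
noncomputable def crossingLeft (f : Module.Dual k H) : H ⊗[k] H →ₗ[k] V :=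
  TensorProduct.lift (aV.compl₂ (B.flip v ∘ₗ (LinearMap.mul k H).compr₂ f))

@[simp]
theorem crossingLeft_tmul (f : Module.Dual k H) (a b : H) :
    crossingLeft aV B v f (a ⊗ₜ b) = aV a (B (f ∘ₗ LinearMap.mulLeft k b) v) :=
  rfl

noncomputable def crossingRight (f : Module.Dual k H) : H ⊗[k] H →ₗ[k] V :=
  TensorProduct.lift ((B ∘ₗ (LinearMap.mul k H).flip.compr₂ f).compl₂ (aV.flip v))

@[simp]
theorem crossingRight_tmul (f : Module.Dual k H) (a b : H) :
    crossingRight aV B v f (a ⊗ₜ b) = B (f ∘ₗ LinearMap.mulRight k a) (aV b v) :=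
  rfl

noncomputable def straightening (f : Module.Dual k H) : H ⊗[k] (H ⊗[k] H) →ₗ[k] V :=
  TensorProduct.lift ((B ∘ₗ TensorProduct.lift (LinearMap.mk₂ k
      (fun a u => f ∘ₗ LinearMap.mulLeft k u ∘ₗ LinearMap.mulRight k a)
      (fun _ _ _ => by ext; simp [mul_add]) (fun _ _ _ => by ext; simp)
      (fun _ _ _ => by ext; simp [add_mul]) (fun _ _ _ => by ext; simp))).compl₂
    (aV.flip v)) ∘ₗ
    (TensorProduct.assoc k H H H).symm.toLinearMap ∘ₗ
    (TensorProduct.comm k H H).toLinearMap.lTensor H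

@[simp]
theorem straightening_tmul (f : Module.Dual k H) (a b u : H) :
    straightening aV B v f (a ⊗ₜ (b ⊗ₜ u)) =
      B (f ∘ₗ LinearMap.mulLeft k u ∘ₗ LinearMap.mulRight k a) (aV b v) :=
  rfl

theorem straightening_comp_lTensor_flip_mk (f : Module.Dual k H) (u : H) :
    straightening aV B v f ∘ₗ ((TensorProduct.mk k H H).flip u).lTensor H =
      crossingRight aV B v (f ∘ₗ LinearMap.mulLeft k u) := by
  ext a b
  simp [LinearMap.comp_assoc]

theorem straightening_mulLeft_comp_lTensor_lTensor (sInv : H →ₗ[k] H) (f : Module.Dual k H)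
    (b : H) :
    straightening aV B v (f ∘ₗ LinearMap.mulLeft k b) ∘ₗ (sInv.lTensor H).lTensor H =
      straightening aV B v f ∘ₗ
        ((flipMulRight sInv).lTensor H).lTensor H ∘ₗ
        ((TensorProduct.assoc k H H H).toLinearMap.lTensor H ∘ₗ
          (TensorProduct.assoc k H (H ⊗[k] H) H).toLinearMap) ∘ₗ
        (TensorProduct.mk k (H ⊗[k] (H ⊗[k] H)) H).flip b := by
  ext a x c
  simp [LinearMap.mulLeft_mul, LinearMap.comp_assoc]

theorem crossing_of_straightening {sInv : H →ₗ[k] H}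
    (h₁ : Function.LeftInverse sInv (HopfAlgebra.antipode k))
    (h₂ : Function.RightInverse sInv (HopfAlgebra.antipode k))
    (hS : ∀ (f : Module.Dual k H) (h : H), aV h (B f v) =
      straightening aV B v f ((sInv.lTensor H).lTensor H (comul.lTensor H (comul h))))
    (f : Module.Dual k H) :
    crossingLeft aV B v f ∘ₗ comul = crossingRight aV B v f ∘ₗ comul := by
  have hL : crossingLeft aV B v f = straightening aV B v f ∘ₗ
      ((flipMulRight sInv).lTensor H).lTensor H ∘ₗ
      ((TensorProduct.assoc k H H H).toLinearMap.lTensor H ∘ₗ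
        (TensorProduct.assoc k H (H ⊗[k] H) H).toLinearMap) ∘ₗ
      (comul.lTensor H ∘ₗ comul).rTensor H := by
    ext a b
    simpa [hS] using congr($(straightening_mulLeft_comp_lTensor_lTensor aV B v sInv f b)
      (comul.lTensor H (comul a)))
  rw [hL, LinearMap.comp_assoc, LinearMap.comp_assoc, LinearMap.comp_assoc,
    lTensor_lTensor_flipMulRight_comp_comul_comul_comul h₁ h₂, ← LinearMap.comp_assoc,
    straightening_comp_lTensor_flip_mk, LinearMap.mulLeft_one, LinearMap.comp_id]

theorem straightening_of_crossing {sInv : H →ₗ[k] H}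
    (h₁ : Function.LeftInverse sInv (HopfAlgebra.antipode k))
    (h₂ : Function.RightInverse sInv (HopfAlgebra.antipode k))
    (hC : ∀ f : Module.Dual k H, crossingLeft aV B v f ∘ₗ comul = crossingRight aV B v f ∘ₗ comul)
    (f : Module.Dual k H) (h : H) :
    aV h (B f v) =
      straightening aV B v f ((sInv.lTensor H).lTensor H (comul.lTensor H (comul h))) := by
  have hLeft : ∀ c, crossingLeft aV B v f ∘ₗ (flipMulLeft sInv).lTensor H ∘ₗ
      ((TensorProduct.mk k H H).flip c).lTensor H =
      crossingLeft aV B v (f ∘ₗ LinearMap.mulLeft k (sInv c)) := by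
    intro c
    ext a b
    simp [LinearMap.mulLeft_mul, LinearMap.comp_assoc]
  have hRight : ∀ c, straightening aV B v f ∘ₗ (sInv.lTensor H).lTensor H ∘ₗ
      ((TensorProduct.mk k H H).flip c).lTensor H =
      crossingRight aV B v (f ∘ₗ LinearMap.mulLeft k (sInv c)) := by
    intro c
    ext a b
    simp [LinearMap.comp_assoc]
  have key : crossingLeft aV B v f ∘ₗ (flipMulLeft sInv).lTensor H ∘ₗ
      (TensorProduct.assoc k H H H).toLinearMap ∘ₗ comul.rTensor H =
      straightening aV B v f ∘ₗ (sInv.lTensor H).lTensor H ∘ₗ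
        (TensorProduct.assoc k H H H).toLinearMap ∘ₗ comul.rTensor H := by
    refine TensorProduct.ext' fun x c => ?_
    have := congr($(hC (f ∘ₗ LinearMap.mulLeft k (sInv c))) x)
    rw [← hLeft, ← hRight] at this
    simpa [assoc_tmul_eq_lTensor_flip_mk] using this
  calc aV h (B f v) = crossingLeft aV B v f (h ⊗ₜ 1) := by simp
    _ = crossingLeft aV B v f ((flipMulLeft sInv).lTensor H (comul.lTensor H (comul h))) :=
      congr(crossingLeft aV B v f
        $(LinearMap.congr_fun (lTensor_flipMulLeft_comp_comul_comul h₁ h₂) h)).symm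
    _ = straightening aV B v f ((sInv.lTensor H).lTensor H (comul.lTensor H (comul h))) := by
      simpa [coassoc_apply] using congr($key (comul h))

theorem sliceRight_sliceRight_assoc_symm_lTensor_comul {M : Type*} [AddCommGroup M] [Module k M]
    (g g' : Module.Dual k H) (x : M ⊗[k] H) :
    sliceRight g' (sliceRight g ((TensorProduct.assoc k M H H).symm (comul.lTensor M x))) =
      sliceRight (dualConv g' g) x := by
  induction x using TensorProduct.induction_on with
  | zero => simp
  | add x y hx hy => simp only [map_add, hx, hy]
  | tmul m a =>
    simp only [LinearMap.lTensor_tmul, sliceRight_tmul, dualConv, LinearMap.comp_apply]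
    induction comul (R := k) a using TensorProduct.induction_on with
    | zero => simp
    | add y z hy hz => simp only [TensorProduct.tmul_add, map_add, hy, hz, add_smul]
    | tmul b c => simp [smul_smul, mul_comm]

variable {ρ : V →ₗ[k] V ⊗[k] H}

theorem ydCoassoc_of_sliceRight (hρ : ∀ g v, sliceRight g (ρ v) = B g v)
    (hB : ∀ (f g : Module.Dual k H) (v : V), B (dualConv f g) v = B f (B g v)) :
    YDCoassoc k H V ρ := by
  refine LinearMap.ext fun v => (TensorProduct.assoc k V H H).symm.injective ?_
  refine ext_sliceRight fun g => ext_sliceRight fun g' => ?_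
  simp only [LinearMap.comp_apply, LinearEquiv.coe_coe, LinearEquiv.symm_apply_apply]
  rw [sliceRight_map, LinearMap.comp_id, hρ, hρ, ← hB, ← hρ]
  exact (sliceRight_sliceRight_assoc_symm_lTensor_comul g g' (ρ v)).symm

theorem ydCounital_of_sliceRight (hρ : ∀ g v, sliceRight g (ρ v) = B g v)
    (hB : ∀ v, B counit v = v) : YDCounital k H V ρ :=
  LinearMap.ext fun v => (hρ _ v).trans (hB v)

theorem map_lift_mul'_tensorTensorTensorComm (a b : H) (s : V ⊗[k] H) :
    TensorProduct.map (TensorProduct.lift aV) (LinearMap.mul' k H)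
        (TensorProduct.tensorTensorTensorComm k H H V H ((a ⊗ₜ b) ⊗ₜ s)) =
      TensorProduct.map (aV a) (LinearMap.mulLeft k b) s := by
  induction s using TensorProduct.induction_on with
  | zero => simp
  | tmul w x => simp
  | add x y hx hy => simp only [TensorProduct.tmul_add, map_add, hx, hy]

theorem sliceRight_mul'_assoc_tmul {M : Type*} [AddCommGroup M] [Module k M]
    (g : Module.Dual k H) (s : M ⊗[k] H) (a : H) :
    sliceRight (g ∘ₗ LinearMap.mul' k H) (TensorProduct.assoc k M H H (s ⊗ₜ a)) =
      sliceRight (g ∘ₗ LinearMap.mulRight k a) s := by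
  induction s using TensorProduct.induction_on with
  | zero => simp
  | tmul w x => simp
  | add x y hx hy => simp only [TensorProduct.add_tmul, map_add, hx, hy]

theorem ydCrossing_iff (hρ : ∀ g v, sliceRight g (ρ v) = B g v) :
    YDCrossing k H V aV ρ ↔
      ∀ v f, crossingLeft aV B v f ∘ₗ comul = crossingRight aV B v f ∘ₗ comul := by
  rw [YDCrossing, eq_iff_forall_sliceRight_tmul, forall_comm]
  refine forall_congr' fun v => ?_
  rw [forall_comm]
  refine forall_congr' fun g => ?_
  rw [LinearMap.ext_iff]
  refine forall_congr' fun h => ?_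
  simp only [LinearMap.comp_apply, TensorProduct.map_tmul]
  rw [← (Coalgebra.Repr.arbitrary k h).eq]
  simp [TensorProduct.sum_tmul, map_lift_mul'_tensorTensorTensorComm, sliceRight_map, hρ,
    sliceRight_mul'_assoc_tmul]

variable {ι : Type*} [Fintype ι] (e : Module.Basis ι k H)

noncomputable def coactionOfBasis : V →ₗ[k] V ⊗[k] H :=
  ∑ i, (TensorProduct.mk k V H).flip (e i) ∘ₗ B (e.coord i)

theorem sliceRight_coactionOfBasis (g : Module.Dual k H) (v : V) :
    sliceRight g (coactionOfBasis B e v) = B g v := by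
  conv_rhs => rw [← e.sum_dual_apply_smul_coord g]
  simp only [coactionOfBasis, LinearMap.sum_apply, LinearMap.comp_apply, map_sum, map_smul,
    LinearMap.flip_apply, TensorProduct.mk_apply, sliceRight_tmul, LinearMap.smul_apply]

theorem ydHalfBraiding_coactionOfBasis {W : Type u} [AddCommGroup W] [Module k W]
    (aW : H →ₗ[k] W →ₗ[k] W) :
    ydHalfBraiding (coactionOfBasis B e) (TensorProduct.lift aW) =
      (TensorProduct.comm k V W).toLinearMap ∘ₗ
        ∑ i, TensorProduct.map (B (e.coord i)) (aW (HopfAlgebra.antipode k (e i))) :=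
  TensorProduct.ext' fun v w => by
    simp [ydHalfBraiding, coactionOfBasis, TensorProduct.sum_tmul]

end DoubleModule

theorem double_modules_iso_yd
    (sInv : H →ₗ[k] H)
    (hsInv₁ : ∀ x : H, sInv (HopfAlgebra.antipode (R := k) x) = x)
    (hsInv₂ : ∀ x : H, HopfAlgebra.antipode (R := k) (sInv x) = x)
    (ι : Type u) [Fintype ι] (e : Module.Basis ι k H)
    (V : Type u) [AddCommGroup V] [Module k V]
    (aV : H →ₗ[k] V →ₗ[k] V)
    (B : Module.Dual k H →ₗ[k] V →ₗ[k] V)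
    (hB1 : ∀ v : V, B (Coalgebra.counit (R := k)) v = v)
    (hB2 : ∀ (f g : Module.Dual k H) (v : V),
      B (dualConv f g) v = B f (B g v)) :
    let ΔV : V →ₗ[k] V ⊗[k] H :=
      ∑ i, ((TensorProduct.mk k V H).flip (e i)) ∘ₗ (B (e.coord i))
    let Compat : Prop :=
      ∀ (h : H) (f : Module.Dual k H) (v : V) (ι' : Type u) (S : Finset ι')
        (h₁ h₂ h₃ : ι' → H),
        (TensorProduct.map LinearMap.id (Coalgebra.comul (R := k)))
            (Coalgebra.comul (R := k) h) =
          ∑ i ∈ S, h₁ i ⊗ₜ (h₂ i ⊗ₜ h₃ i) →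
        aV h (B f v) =
          ∑ i ∈ S,
            B (f ∘ₗ (LinearMap.mulLeft k (sInv (h₃ i))) ∘ₗ
                (LinearMap.mulRight k (h₁ i)))
              (aV (h₂ i) v)
    -- the compatibility holds iff `V` is a Yetter-Drinfeld module
    (Compat ↔
      (YDCoassoc k H V ΔV ∧ YDCounital k H V ΔV ∧ YDCrossing k H V aV ΔV)) ∧
    -- the `H*`-action is recovered from the coaction
    (∀ (f : Module.Dual k H) (v : V),
      B f v = (TensorProduct.rid k V)
        ((TensorProduct.map LinearMap.id f) (ΔV v))) ∧
    -- the braiding coming from the canonical R-matrix of `D(H)` is the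
    -- Yetter-Drinfeld braiding
    (Compat →
      ∀ (W : Type u) [AddCommGroup W] [Module k W]
        (aW : H →ₗ[k] W →ₗ[k] W), IsAction k H W aW →
        (TensorProduct.comm k V W).toLinearMap ∘ₗ
            (∑ i, TensorProduct.map (B (e.coord i))
              (aW (HopfAlgebra.antipode (R := k) (e i)))) =
          ydHalfBraiding ΔV (TensorProduct.lift aW)) := by
  intro ΔV Compat
  have hΔV : ∀ g v, sliceRight g (ΔV v) = B g v := sliceRight_coactionOfBasis B e
  have compat_iff : Compat ↔ ∀ h f v, aV h (B f v) = straightening aV B v f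
      ((sInv.lTensor H).lTensor H (Coalgebra.comul.lTensor H (Coalgebra.comul h))) := by
    refine forall₃_congr fun h f v => ?_
    have := eq_apply_iff_forall_eq_sum_tmul_tmul
      (straightening aV B v f ∘ₗ (sInv.lTensor H).lTensor H)
      (Coalgebra.comul.lTensor H (Coalgebra.comul h)) (aV h (B f v))
    simp only [LinearMap.comp_apply, LinearMap.lTensor_tmul, straightening_tmul] at this
    exact this
  refine ⟨?_, fun f v => (hΔV f v).symm,
    fun _ W _ _ aW _ => (ydHalfBraiding_coactionOfBasis B e aW).symm⟩
  rw [compat_iff, ydCrossing_iff aV B hΔV]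
  exact ⟨fun hS => ⟨ydCoassoc_of_sliceRight B hΔV hB2, ydCounital_of_sliceRight B hΔV hB1,
      fun v => crossing_of_straightening aV B v hsInv₁ hsInv₂ fun f h => hS h f v⟩,
    fun ⟨_, _, hC⟩ h f v => straightening_of_crossing aV B v hsInv₁ hsInv₂ (hC v) f h⟩
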